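/- arXiv:0708.3357 — 2 statements merged into one kernel-verified Lean document; each statement's English description precedes it below -/
import Mathlib

section
/- For every g ∈ G and every C^∞ function f : ℂ → ℂ, one has L(T_g f) = T_g(L f), where (T_g f)(z) = J(g,z)·f(g·z); that is, the magnetic Schrödinger operator L commutes with the projective translations T_g. -/
noncomputable section

open Complex

/-- The group `G = 𝕋 ⋉ ℂ`, with elements `[a,b]`, acting on `ℂ` by `z ↦ a z + b`. -/
@[ext]
structure GT : Type where
  a : Circle
  b : ℂ

namespace GT

instance : Group GT where
  mul g h := ⟨g.a * h.a, (g.a : ℂ) * h.b + g.b⟩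
  one := ⟨1, 0⟩
  inv g := ⟨g.a⁻¹, -((g.a⁻¹ : ℂ) * g.b)⟩
  mul_assoc g h k := by
    refine GT.ext (mul_assoc _ _ _) ?_
    show ((g.a * h.a : Circle) : ℂ) * k.b + ((g.a : ℂ) * h.b + g.b)
        = (g.a : ℂ) * ((h.a : ℂ) * k.b + h.b) + g.b
    push_cast; ring
  one_mul g := by
    refine GT.ext (one_mul _) ?_
    show ((1 : Circle) : ℂ) * g.b + 0 = g.b
    simp
  mul_one g := by
    refine GT.ext (mul_one _) ?_
    show (g.a : ℂ) * 0 + g.b = g.b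
    simp
  inv_mul_cancel g := by
    refine GT.ext (inv_mul_cancel _) ?_
    show ((g.a⁻¹ : Circle) : ℂ) * g.b + -(((g.a : ℂ))⁻¹ * g.b) = 0
    push_cast; ring

/-- The action of `G` on `ℂ` : `[a,b]·z = a z + b`. -/
def act (g : GT) (z : ℂ) : ℂ := (g.a : ℂ) * z + g.b

end GT

/-- The Hermitian product `⟨z,w⟩ = z·conj w`. -/
def herm (z w : ℂ) : ℂ := z * (starRingEnd ℂ) w

/-- The automorphic factor `j^α(g,z) = exp(2 i α Im⟨z, g⁻¹·0⟩)`. -/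
def jfac (α : ℝ) (g : GT) (z : ℂ) : ℂ :=
  Complex.exp (2 * Complex.I * (α : ℂ) * ((herm z (GT.act g⁻¹ 0)).im : ℂ))

/-- The Wirtinger derivative `∂f/∂z = (1/2)(∂f/∂x − i ∂f/∂y)`. -/
def wderiv (f : ℂ → ℂ) (z : ℂ) : ℂ :=
  (1 / 2 : ℂ) * (fderiv ℝ f z 1 - Complex.I * fderiv ℝ f z Complex.I)

/-- The anti-Wirtinger derivative `∂f/∂z̄ = (1/2)(∂f/∂x + i ∂f/∂y)`. -/
def wderivBar (f : ℂ → ℂ) (z : ℂ) : ℂ :=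
  (1 / 2 : ℂ) * (fderiv ℝ f z 1 + Complex.I * fderiv ℝ f z Complex.I)

/-- The Euclidean Laplacian `Δ = 4 ∂²/∂z∂z̄`. -/
def lap (f : ℂ → ℂ) (z : ℂ) : ℂ := 4 * wderiv (fun w => wderivBar f w) z

/-- `S(z) = ν z + μ (τ(z)·∂τ̄/∂z̄(z) − τ̄(z)·∂τ/∂z̄(z))`. -/
def Sfun (ν μ : ℝ) (τ : ℂ → ℂ) (z : ℂ) : ℂ :=
  (ν : ℂ) * z + (μ : ℂ) *
    (τ z * wderivBar (fun w => (starRingEnd ℂ) (τ w)) z - (starRingEnd ℂ) (τ z) * wderivBar τ z)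

/-- `B(z) = ν + μ(|∂τ/∂z(z)|² − |∂τ/∂z̄(z)|²)`. -/
def Bfun (ν μ : ℝ) (τ : ℂ → ℂ) (z : ℂ) : ℝ :=
  ν + μ * (‖wderiv τ z‖ ^ 2 - ‖wderivBar τ z‖ ^ 2)

/-- The magnetic Schrödinger operator `L`. -/
def Lop (ν μ : ℝ) (τ : ℂ → ℂ) (f : ℂ → ℂ) (z : ℂ) : ℂ :=
  - wderiv (fun w => wderivBar f w) z
    - (Sfun ν μ τ z * wderiv f z - (starRingEnd ℂ) (Sfun ν μ τ z) * wderivBar f z)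
    + ((‖Sfun ν μ τ z‖ : ℂ)) ^ 2 * f z
    - ((μ : ℂ) / 4) *
        (τ z * lap (fun w => (starRingEnd ℂ) (τ w)) z - (starRingEnd ℂ) (τ z) * lap τ z) * f z

/-- The annihilation operator `A f = ∂f/∂z̄ + S f`. -/
def Aop (ν μ : ℝ) (τ : ℂ → ℂ) (f : ℂ → ℂ) (z : ℂ) : ℂ :=
  wderivBar f z + Sfun ν μ τ z * f z

/-- The creation operator `Ã f = −∂f/∂z + conj(S) f`. -/
def Atop (ν μ : ℝ) (τ : ℂ → ℂ) (f : ℂ → ℂ) (z : ℂ) : ℂ :=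
  - wderiv f z + (starRingEnd ℂ) (Sfun ν μ τ z) * f z

/-- `J(g,z) = j^ν(g,z)·j^μ(ρ(g),τ(z))`. -/
def Jfun (ν μ : ℝ) (ρ : GT → GT) (τ : ℂ → ℂ) (g : GT) (z : ℂ) : ℂ :=
  jfac ν g z * jfac μ (ρ g) (τ z)

/-- `φ_ρ(g,g') = Im(ν⟨g⁻¹·0,g'·0⟩ + μ⟨ρ(g⁻¹)·0, ρ(g')·0⟩)`. -/
def phiRho (ν μ : ℝ) (ρ : GT → GT) (g g' : GT) : ℝ :=
  ((ν : ℂ) * herm (GT.act g⁻¹ 0) (GT.act g' 0)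
    + (μ : ℂ) * herm (GT.act (ρ g⁻¹) 0) (GT.act (ρ g') 0)).im

/-- Membership in the lattice `Γ = ℤω₁ + ℤω₂`. -/
def inLattice (ω₁ ω₂ : ℂ) (γ : ℂ) : Prop := ∃ m n : ℤ, γ = (m : ℂ) * ω₁ + (n : ℂ) * ω₂

/-- Mixed `Γ`-automorphic form of type `(ν,μ)` w.r.t. the pair `(ρ,τ)`. -/
def MixedForm (ν μ : ℝ) (ρ : GT → GT) (τ : ℂ → ℂ) (ω₁ ω₂ : ℂ) (F : ℂ → ℂ) : Prop :=
  ContDiff ℝ (⊤ : ℕ∞) F ∧ ∀ γ : ℂ, inLattice ω₁ ω₂ γ → ∀ z : ℂ,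
    F (z + γ) = jfac (-ν) ⟨(1 : Circle), γ⟩ z * jfac (-μ) (ρ ⟨(1 : Circle), γ⟩) (τ z) * F z

/-- The Laguerre polynomial `L_k`. -/
def laguerre (k : ℕ) (x : ℝ) : ℝ :=
  ∑ j ∈ Finset.range (k + 1), (-1) ^ j * (k.choose j : ℝ) * x ^ j / (Nat.factorial j : ℝ)


/-- The multiplier `χ_τ(γ) = exp(iφ(γ) − 2iμ Im⟨τ(0), ρ([1,γ])⁻¹·0⟩)`. -/
def chiTau (μ : ℝ) (ρ : GT → GT) (τ : ℂ → ℂ) (φ : ℂ → ℝ) (γ : ℂ) : ℂ :=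
  Complex.exp (Complex.I * (φ γ : ℂ)
    - 2 * Complex.I * (μ : ℂ) * ((herm (τ 0) (GT.act (ρ ⟨1, γ⟩)⁻¹ 0)).im : ℂ))

/-- The eigenprojector kernel `K_k`. -/
def Kker (B : ℝ) (φ : ℂ → ℝ) (k : ℕ) (z w : ℂ) : ℂ :=
  ((2 * B / Real.pi : ℝ) : ℂ) * Complex.exp (-Complex.I * ((φ z - φ w : ℝ) : ℂ)) *
    Complex.exp (2 * Complex.I * (B : ℂ) * ((herm z w).im : ℂ)) *
    Complex.exp (-((B * ‖z - w‖ ^ 2 : ℝ) : ℂ)) *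
    ((laguerre k (2 * B * ‖z - w‖ ^ 2) : ℝ) : ℂ)

/-- The kernel `K^σ_ξ;k`. -/
def Kxi (σ : ℝ) (ξ : ℂ) (k : ℕ) (z w : ℂ) : ℂ :=
  ((2 * σ / Real.pi : ℝ) : ℂ) * Complex.exp (2 * Complex.I * ((herm (z - w) ξ).im : ℂ)) *
    Complex.exp (2 * Complex.I * (σ : ℂ) * ((herm z w).im : ℂ)) *
    Complex.exp (-((σ * ‖z - w‖ ^ 2 : ℝ) : ℂ)) *
    ((laguerre k (2 * σ * ‖z - w‖ ^ 2) : ℝ) : ℂ)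

/-- `m`-fold iterate of the creation operator `Ã`. -/
def AtopIter (ν μ : ℝ) (τ : ℂ → ℂ) (m : ℕ) (f : ℂ → ℂ) : ℂ → ℂ :=
  (fun u z => Atop ν μ τ u z)^[m] f

/-!
`L` factors as `Ã A + B` with `A = ∂̄ + S`, `Ã = -∂ + S̄` and the magnetic field
`B = ν + μ (|∂τ|² - |∂̄τ|²)`. Write `J(g, ·) = exp (Φ - Φ̄)`. For `g = [a, b]`, differentiating the
equivariance `τ (g·z) = χ(g) τ(z) + ψ(g)` gives `conj a · S(g·z) = S(z) + ∂̄(Φ - Φ̄)(z)`, which is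
exactly the identity `A T_g = conj a · T_g A`; its conjugate gives `Ã T_g = a · T_g Ã`, and the
same chain rule shows `B(g·z) = B(z)`. Hence `L T_g = conj a · a · T_g Ã A + T_g B = T_g L`.
-/

open ComplexConjugate

section Wirtinger

variable {f u v : ℂ → ℂ} {z : ℂ}

@[fun_prop]
lemma Differentiable.conj (hu : Differentiable ℝ u) : Differentiable ℝ (fun w => conj (u w)) :=
  conjCLE.differentiable.comp hu

@[fun_prop]
lemma ContDiff.conj {n : WithTop ℕ∞} (hu : ContDiff ℝ n u) : ContDiff ℝ n (fun w => conj (u w)) :=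
  conjCLE.contDiff.comp hu

lemma fderiv_apply_eq_wderiv (f : ℂ → ℂ) (z v : ℂ) :
    fderiv ℝ f z v = wderiv f z * v + wderivBar f z * conj v := by
  obtain ⟨a, b, rfl⟩ : ∃ a b : ℝ, v = a + b * I := ⟨v.re, v.im, (re_add_im v).symm⟩
  have hL : fderiv ℝ f z (a + b * I) = a * fderiv ℝ f z 1 + b * fderiv ℝ f z I := by
    rw [show (a : ℂ) + b * I = a • (1 : ℂ) + b • I by simp [real_smul], map_add, map_smul,
      map_smul, real_smul, real_smul]
  have hc : conj ((a : ℂ) + b * I) = a - b * I := by simp [sub_eq_add_neg]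
  rw [wderiv, wderivBar, hL, hc]
  linear_combination (fderiv ℝ f z I * b) * I_sq

lemma wderiv_add (hu : DifferentiableAt ℝ u z) (hv : DifferentiableAt ℝ v z) :
    wderiv (fun w => u w + v w) z = wderiv u z + wderiv v z := by
  simp only [wderiv, fderiv_fun_add hu hv, add_apply]; ring

lemma wderivBar_add (hu : DifferentiableAt ℝ u z) (hv : DifferentiableAt ℝ v z) :
    wderivBar (fun w => u w + v w) z = wderivBar u z + wderivBar v z := by
  simp only [wderivBar, fderiv_fun_add hu hv, add_apply]; ring

lemma wderiv_sub (hu : DifferentiableAt ℝ u z) (hv : DifferentiableAt ℝ v z) :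
    wderiv (fun w => u w - v w) z = wderiv u z - wderiv v z := by
  simp only [wderiv, fderiv_fun_sub hu hv, sub_apply]; ring

lemma wderivBar_sub (hu : DifferentiableAt ℝ u z) (hv : DifferentiableAt ℝ v z) :
    wderivBar (fun w => u w - v w) z = wderivBar u z - wderivBar v z := by
  simp only [wderivBar, fderiv_fun_sub hu hv, sub_apply]; ring

lemma wderiv_mul (hu : DifferentiableAt ℝ u z) (hv : DifferentiableAt ℝ v z) :
    wderiv (fun w => u w * v w) z = wderiv u z * v z + u z * wderiv v z := by
  simp only [wderiv, fderiv_fun_mul hu hv, add_apply, smul_apply, smul_eq_mul]; ring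

lemma wderivBar_mul (hu : DifferentiableAt ℝ u z) (hv : DifferentiableAt ℝ v z) :
    wderivBar (fun w => u w * v w) z = wderivBar u z * v z + u z * wderivBar v z := by
  simp only [wderivBar, fderiv_fun_mul hu hv, add_apply, smul_apply, smul_eq_mul]; ring

lemma wderiv_const_mul (c : ℂ) (hu : DifferentiableAt ℝ u z) :
    wderiv (fun w => c * u w) z = c * wderiv u z := by
  simp only [wderiv, fderiv_const_mul hu c, smul_apply, smul_eq_mul]; ring

lemma wderivBar_const_mul (c : ℂ) (hu : DifferentiableAt ℝ u z) :
    wderivBar (fun w => c * u w) z = c * wderivBar u z := by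
  simp only [wderivBar, fderiv_const_mul hu c, smul_apply, smul_eq_mul]; ring

lemma wderiv_add_const (c : ℂ) : wderiv (fun w => u w + c) z = wderiv u z := by
  simp only [wderiv, fderiv_add_const]

lemma wderivBar_add_const (c : ℂ) : wderivBar (fun w => u w + c) z = wderivBar u z := by
  simp only [wderivBar, fderiv_add_const]

lemma wderiv_id : wderiv (fun w => w) z = 1 := by
  simp only [wderiv, fderiv_fun_id, ContinuousLinearMap.id_apply]
  linear_combination (-1 / 2 : ℂ) * I_sq

lemma wderivBar_id : wderivBar (fun w => w) z = 0 := by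
  simp only [wderivBar, fderiv_fun_id, ContinuousLinearMap.id_apply]
  linear_combination (1 / 2 : ℂ) * I_sq

lemma wderiv_conj : wderiv (fun w => conj (u w)) z = conj (wderivBar u z) := by
  simp only [wderiv, wderivBar, starRingEnd_apply, fderiv_star, ContinuousLinearMap.comp_apply,
    ContinuousLinearEquiv.coe_coe, starL'_apply]
  simp only [star_mul', star_add, star_div₀, star_one, star_ofNat, RCLike.star_def, conj_I]
  ring

lemma wderivBar_conj : wderivBar (fun w => conj (u w)) z = conj (wderiv u z) := by
  simp only [wderiv, wderivBar, starRingEnd_apply, fderiv_star, ContinuousLinearMap.comp_apply,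
    ContinuousLinearEquiv.coe_coe, starL'_apply]
  simp only [star_mul', star_sub, star_div₀, star_one, star_ofNat, RCLike.star_def, conj_I]
  ring

lemma wderiv_cexp (hu : DifferentiableAt ℝ u z) :
    wderiv (fun w => exp (u w)) z = exp (u z) * wderiv u z := by
  simp only [wderiv, hu.hasFDerivAt.cexp.fderiv, smul_apply, smul_eq_mul]; ring

lemma wderivBar_cexp (hu : DifferentiableAt ℝ u z) :
    wderivBar (fun w => exp (u w)) z = exp (u z) * wderivBar u z := by
  simp only [wderivBar, hu.hasFDerivAt.cexp.fderiv, smul_apply, smul_eq_mul]; ring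

lemma wderiv_comp_affine {a b : ℂ} (hf : DifferentiableAt ℝ f (a * z + b)) :
    wderiv (fun w => f (a * w + b)) z = a * wderiv f (a * z + b) := by
  have hA : HasFDerivAt (fun w : ℂ => a * w + b) (ContinuousLinearMap.mul ℝ ℂ a) z :=
    (ContinuousLinearMap.mul ℝ ℂ a).hasFDerivAt.add_const b
  have hfA : HasFDerivAt (fun w => f (a * w + b)) _ z := hf.hasFDerivAt.comp z hA
  rw [wderiv, hfA.fderiv]
  simp only [ContinuousLinearMap.comp_apply, ContinuousLinearMap.mul_apply',
    fderiv_apply_eq_wderiv f, map_mul, conj_I, map_one]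
  linear_combination (wderivBar f (a * z + b) * conj a - wderiv f (a * z + b) * a) / 2 * I_sq

lemma wderivBar_comp_affine {a b : ℂ} (hf : DifferentiableAt ℝ f (a * z + b)) :
    wderivBar (fun w => f (a * w + b)) z = conj a * wderivBar f (a * z + b) := by
  have hA : HasFDerivAt (fun w : ℂ => a * w + b) (ContinuousLinearMap.mul ℝ ℂ a) z :=
    (ContinuousLinearMap.mul ℝ ℂ a).hasFDerivAt.add_const b
  have hfA : HasFDerivAt (fun w => f (a * w + b)) _ z := hf.hasFDerivAt.comp z hA
  rw [wderivBar, hfA.fderiv]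
  simp only [ContinuousLinearMap.comp_apply, ContinuousLinearMap.mul_apply',
    fderiv_apply_eq_wderiv f, map_mul, conj_I, map_one]
  linear_combination (wderiv f (a * z + b) * a - wderivBar f (a * z + b) * conj a) / 2 * I_sq

lemma contDiff_wderivBar {n : WithTop ℕ∞} (hf : ContDiff ℝ (n + 1) f) :
    ContDiff ℝ n (wderivBar f) := by
  have hf' : ContDiff ℝ n (fderiv ℝ f) := hf.fderiv_right le_rfl
  unfold wderivBar
  fun_prop

end Wirtinger

section Factorization

variable {ν μ : ℝ} {τ : ℂ → ℂ}

lemma Sfun_eq (z : ℂ) : Sfun ν μ τ z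
    = ν * z + μ * (τ z * conj (wderiv τ z) - conj (τ z) * wderivBar τ z) := by
  rw [Sfun, wderivBar_conj]

lemma contDiff_Sfun (hτ : ContDiff ℝ 2 τ) : ContDiff ℝ 1 (Sfun ν μ τ) := by
  have hτ' : ContDiff ℝ (1 + 1) τ := hτ
  have hτ₁ : ContDiff ℝ 1 τ := hτ.of_le one_le_two
  have h₁ := contDiff_wderivBar hτ'
  have h₂ := contDiff_wderivBar hτ'.conj
  unfold Sfun
  fun_prop

lemma contDiff_Aop (hτ : ContDiff ℝ 2 τ) {f : ℂ → ℂ} (hf : ContDiff ℝ 2 f) :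
    ContDiff ℝ 1 (Aop ν μ τ f) := by
  have hf' : ContDiff ℝ (1 + 1) f := hf
  have hf₁ : ContDiff ℝ 1 f := hf.of_le one_le_two
  have hS := contDiff_Sfun (ν := ν) (μ := μ) hτ
  have hdf := contDiff_wderivBar hf'
  unfold Aop
  fun_prop

lemma wderiv_Sfun (hτ : ContDiff ℝ 2 τ) (z : ℂ) :
    wderiv (Sfun ν μ τ) z = Bfun ν μ τ z
      + μ / 4 * (τ z * lap (fun w => conj (τ w)) z - conj (τ z) * lap τ z) := by
  have hτ' : ContDiff ℝ (1 + 1) τ := hτ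
  have hτd := hτ.differentiable two_ne_zero
  have hdτ := (contDiff_wderivBar hτ').differentiable one_ne_zero
  have hdτc := (contDiff_wderivBar hτ'.conj).differentiable one_ne_zero
  have hA : DifferentiableAt ℝ (fun w => τ w * wderivBar (fun x => conj (τ x)) w) z :=
    (hτd z).mul (hdτc z)
  have hB : DifferentiableAt ℝ (fun w => conj (τ w) * wderivBar τ w) z :=
    (hτd.conj z).mul (hdτ z)
  unfold Sfun
  rw [wderiv_add (differentiableAt_fun_id.const_mul _) ((hA.fun_sub hB).const_mul _),
    wderiv_const_mul _ differentiableAt_fun_id, wderiv_id, wderiv_const_mul _ (hA.fun_sub hB),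
    wderiv_sub hA hB, wderiv_mul (hτd z) (hdτc z), wderiv_mul (hτd.conj z) (hdτ z),
    wderiv_conj, wderivBar_conj]
  simp only [lap, Bfun, ofReal_add, ofReal_mul, ofReal_sub, ofReal_pow, ← mul_conj']
  ring

lemma Atop_const_mul (c : ℂ) {h : ℂ → ℂ} {z : ℂ} (hh : DifferentiableAt ℝ h z) :
    Atop ν μ τ (fun w => c * h w) z = c * Atop ν μ τ h z := by
  unfold Atop
  rw [wderiv_const_mul c hh]
  ring

lemma Lop_eq_Atop_Aop (hτ : ContDiff ℝ 2 τ) {f : ℂ → ℂ} (hf : ContDiff ℝ 2 f) (z : ℂ) :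
    Lop ν μ τ f z = Atop ν μ τ (Aop ν μ τ f) z + Bfun ν μ τ z * f z := by
  have hf' : ContDiff ℝ (1 + 1) f := hf
  have hS := (contDiff_Sfun (ν := ν) (μ := μ) hτ).differentiable one_ne_zero
  have hfd := hf.differentiable two_ne_zero
  have hdf := (contDiff_wderivBar hf').differentiable one_ne_zero
  unfold Lop Atop Aop
  rw [wderiv_add (hdf z) ((hS z).fun_mul (hfd z)), wderiv_mul (hS z) (hfd z), wderiv_Sfun hτ,
    ← mul_conj']
  ring

end Factorization

section AutomorphicFactor

variable {ν μ : ℝ} {ρ : GT → GT} {τ : ℂ → ℂ} {g : GT} {z : ℂ}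

/-- The phase `Φ` of `J(g, ·) = exp (2 i Im Φ)`. -/
def jPhase (ν μ : ℝ) (ρ : GT → GT) (τ : ℂ → ℂ) (g : GT) (z : ℂ) : ℂ :=
  ν * herm z (GT.act g⁻¹ 0) + μ * herm (τ z) (GT.act (ρ g)⁻¹ 0)

lemma Jfun_eq_exp (ν μ : ℝ) (ρ : GT → GT) (τ : ℂ → ℂ) (g : GT) (z : ℂ) :
    Jfun ν μ ρ τ g z = exp (jPhase ν μ ρ τ g z - conj (jPhase ν μ ρ τ g z)) := by
  have hIm (α : ℝ) (w : ℂ) : 2 * I * α * (w.im : ℂ) = α * (w - conj w) := by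
    rw [sub_conj]; push_cast; ring
  rw [Jfun, jfac, jfac, hIm, hIm, ← exp_add]
  congr 1
  simp only [jPhase, map_add, map_mul, conj_ofReal]
  ring

lemma contDiff_jPhase {n : WithTop ℕ∞} (hτ : ContDiff ℝ n τ) :
    ContDiff ℝ n (jPhase ν μ ρ τ g) := by
  unfold jPhase herm
  fun_prop

lemma contDiff_Jfun {n : WithTop ℕ∞} (hτ : ContDiff ℝ n τ) : ContDiff ℝ n (Jfun ν μ ρ τ g) := by
  have hΦ := contDiff_jPhase (ν := ν) (μ := μ) (ρ := ρ) (g := g) hτ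
  rw [funext (Jfun_eq_exp ν μ ρ τ g)]
  fun_prop

lemma differentiable_jPhase (hτ : Differentiable ℝ τ) : Differentiable ℝ (jPhase ν μ ρ τ g) := by
  unfold jPhase herm
  fun_prop

lemma differentiable_Jfun (hτ : Differentiable ℝ τ) : Differentiable ℝ (Jfun ν μ ρ τ g) := by
  have hΦ := differentiable_jPhase (ν := ν) (μ := μ) (ρ := ρ) (g := g) hτ
  rw [funext (Jfun_eq_exp ν μ ρ τ g)]
  fun_prop

lemma wderiv_jPhase (hτ : DifferentiableAt ℝ τ z) :
    wderiv (jPhase ν μ ρ τ g) z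
      = ν * conj (GT.act g⁻¹ 0) + μ * conj (GT.act (ρ g)⁻¹ 0) * wderiv τ z := by
  have hΦ : jPhase ν μ ρ τ g
      = fun w => ν * conj (GT.act g⁻¹ 0) * w + μ * conj (GT.act (ρ g)⁻¹ 0) * τ w := by
    funext w; simp only [jPhase, herm]; ring
  rw [hΦ, wderiv_add (by fun_prop) (hτ.const_mul _), wderiv_const_mul _ (by fun_prop),
    wderiv_const_mul _ hτ, wderiv_id, mul_one]

lemma wderivBar_jPhase (hτ : DifferentiableAt ℝ τ z) :
    wderivBar (jPhase ν μ ρ τ g) z = μ * conj (GT.act (ρ g)⁻¹ 0) * wderivBar τ z := by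
  have hΦ : jPhase ν μ ρ τ g
      = fun w => ν * conj (GT.act g⁻¹ 0) * w + μ * conj (GT.act (ρ g)⁻¹ 0) * τ w := by
    funext w; simp only [jPhase, herm]; ring
  rw [hΦ, wderivBar_add (by fun_prop) (hτ.const_mul _), wderivBar_const_mul _ (by fun_prop),
    wderivBar_const_mul _ hτ, wderivBar_id, mul_zero, zero_add]

lemma wderiv_Jfun (hτ : Differentiable ℝ τ) :
    wderiv (Jfun ν μ ρ τ g) z = Jfun ν μ ρ τ g z
      * (wderiv (jPhase ν μ ρ τ g) z - conj (wderivBar (jPhase ν μ ρ τ g) z)) := by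
  have hΦ := differentiable_jPhase (ν := ν) (μ := μ) (ρ := ρ) (g := g) hτ
  rw [funext (Jfun_eq_exp ν μ ρ τ g), wderiv_cexp (by fun_prop), wderiv_sub (hΦ z) (hΦ.conj z),
    wderiv_conj]

lemma wderivBar_Jfun (hτ : Differentiable ℝ τ) :
    wderivBar (Jfun ν μ ρ τ g) z = Jfun ν μ ρ τ g z
      * (wderivBar (jPhase ν μ ρ τ g) z - conj (wderiv (jPhase ν μ ρ τ g) z)) := by
  have hΦ := differentiable_jPhase (ν := ν) (μ := μ) (ρ := ρ) (g := g) hτ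
  rw [funext (Jfun_eq_exp ν μ ρ τ g), wderivBar_cexp (by fun_prop),
    wderivBar_sub (hΦ z) (hΦ.conj z),
    wderivBar_conj]

end AutomorphicFactor

lemma Circle.conj_mul_self (a : Circle) : conj (a : ℂ) * a = 1 := by
  rw [← Circle.coe_inv_eq_conj, ← Circle.coe_mul, inv_mul_cancel, Circle.coe_one]

lemma GT.act_inv_zero (g : GT) : GT.act g⁻¹ 0 = -(conj (g.a : ℂ) * g.b) := by
  rw [← Circle.coe_inv_eq_conj]
  simp only [GT.act, mul_zero, zero_add]
  rfl

lemma wderiv_comp_act {f : ℂ → ℂ} {g : GT} {z : ℂ} (hf : DifferentiableAt ℝ f (GT.act g z)) :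
    wderiv (fun w => f (GT.act g w)) z = g.a * wderiv f (GT.act g z) :=
  wderiv_comp_affine hf

lemma wderivBar_comp_act {f : ℂ → ℂ} {g : GT} {z : ℂ} (hf : DifferentiableAt ℝ f (GT.act g z)) :
    wderivBar (fun w => f (GT.act g w)) z = conj (g.a : ℂ) * wderivBar f (GT.act g z) :=
  wderivBar_comp_affine hf

/-- The projective translation `T_g f = J(g, ·) · f(g · ·)`. -/
def projTranslate (ν μ : ℝ) (ρ : GT → GT) (τ : ℂ → ℂ) (g : GT) (f : ℂ → ℂ) (z : ℂ) : ℂ :=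
  Jfun ν μ ρ τ g z * f (GT.act g z)

lemma contDiff_projTranslate {ν μ : ℝ} {ρ : GT → GT} {τ f : ℂ → ℂ} {n : WithTop ℕ∞}
    (hτ : ContDiff ℝ n τ) (hf : ContDiff ℝ n f) (g : GT) :
    ContDiff ℝ n (projTranslate ν μ ρ τ g f) :=
  (contDiff_Jfun hτ).mul (hf.comp ((contDiff_const.mul contDiff_id).add contDiff_const))

def IsEquivariant (ρ : GT → GT) (τ : ℂ → ℂ) : Prop :=
  ∀ (g : GT) (z : ℂ), τ (GT.act g z) = GT.act (ρ g) (τ z)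

section Equivariant

variable {ν μ : ℝ} {ρ : GT → GT} {τ : ℂ → ℂ}

lemma IsEquivariant.wderiv_act (hρτ : IsEquivariant ρ τ) (hτ : Differentiable ℝ τ) (g : GT)
    (z : ℂ) : wderiv τ (GT.act g z) = conj (g.a : ℂ) * ((ρ g).a * wderiv τ z) := by
  have h := wderiv_comp_act (hτ (GT.act g z))
  rw [show (fun w => τ (GT.act g w)) = fun w => ((ρ g).a : ℂ) * τ w + (ρ g).b from
    funext (hρτ g), wderiv_add_const, wderiv_const_mul _ (hτ z)] at h
  rw [h, ← mul_assoc, Circle.conj_mul_self, one_mul]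

lemma IsEquivariant.wderivBar_act (hρτ : IsEquivariant ρ τ) (hτ : Differentiable ℝ τ) (g : GT)
    (z : ℂ) : wderivBar τ (GT.act g z) = g.a * ((ρ g).a * wderivBar τ z) := by
  have h := wderivBar_comp_act (hτ (GT.act g z))
  rw [show (fun w => τ (GT.act g w)) = fun w => ((ρ g).a : ℂ) * τ w + (ρ g).b from
    funext (hρτ g), wderivBar_add_const, wderivBar_const_mul _ (hτ z)] at h
  rw [h, ← mul_assoc, mul_comm _ (conj _), Circle.conj_mul_self, one_mul]

lemma IsEquivariant.Bfun_act (hρτ : IsEquivariant ρ τ) (hτ : Differentiable ℝ τ) (g : GT)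
    (z : ℂ) : Bfun ν μ τ (GT.act g z) = Bfun ν μ τ z := by
  simp only [Bfun, hρτ.wderiv_act hτ, hρτ.wderivBar_act hτ, norm_mul, RCLike.norm_conj,
    Circle.norm_coe, one_mul]

lemma IsEquivariant.conj_mul_Sfun_act (hρτ : IsEquivariant ρ τ) (hτ : Differentiable ℝ τ)
    (g : GT) (z : ℂ) :
    conj (g.a : ℂ) * Sfun ν μ τ (GT.act g z) = Sfun ν μ τ z
      + (wderivBar (jPhase ν μ ρ τ g) z - conj (wderiv (jPhase ν μ ρ τ g) z)) := by
  rw [Sfun_eq, Sfun_eq, hρτ.wderiv_act hτ, hρτ.wderivBar_act hτ, hρτ g z,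
    wderiv_jPhase (hτ z), wderivBar_jPhase (hτ z), GT.act_inv_zero, GT.act_inv_zero]
  simp only [GT.act, map_mul, map_add, map_neg, conj_conj, conj_ofReal]
  linear_combination (ν * z + μ * τ z * conj (wderiv τ z)
      - μ * (ρ g).a * conj (ρ g).b * wderivBar τ z
      - μ * conj (τ z) * wderivBar τ z
      + μ * (ρ g).b * conj ((ρ g).a : ℂ) * conj (wderiv τ z)) * Circle.conj_mul_self g.a
    + (μ * conj (g.a : ℂ) * g.a * (τ z * conj (wderiv τ z)
      - conj (τ z) * wderivBar τ z)) * Circle.conj_mul_self (ρ g).a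

lemma IsEquivariant.mul_conj_Sfun_act (hρτ : IsEquivariant ρ τ) (hτ : Differentiable ℝ τ)
    (g : GT) (z : ℂ) :
    (g.a : ℂ) * conj (Sfun ν μ τ (GT.act g z)) = conj (Sfun ν μ τ z)
      - (wderiv (jPhase ν μ ρ τ g) z - conj (wderivBar (jPhase ν μ ρ τ g) z)) := by
  have h := congrArg conj (hρτ.conj_mul_Sfun_act (ν := ν) (μ := μ) hτ g z)
  simp only [map_mul, map_add, map_sub, conj_conj] at h
  linear_combination h

lemma IsEquivariant.Aop_projTranslate (hρτ : IsEquivariant ρ τ) (hτ : Differentiable ℝ τ)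
    {f : ℂ → ℂ} (hf : Differentiable ℝ f) (g : GT) (z : ℂ) :
    Aop ν μ τ (projTranslate ν μ ρ τ g f) z
      = conj (g.a : ℂ) * projTranslate ν μ ρ τ g (Aop ν μ τ f) z := by
  have hJ := differentiable_Jfun (ν := ν) (μ := μ) (ρ := ρ) (g := g) hτ
  have hfg : DifferentiableAt ℝ (fun w => f (GT.act g w)) z :=
    (hf _).comp z ((differentiableAt_id.const_mul _).add_const _)
  unfold Aop projTranslate
  rw [wderivBar_mul (hJ z) hfg, wderivBar_Jfun hτ, wderivBar_comp_act (hf _)]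
  linear_combination (-(Jfun ν μ ρ τ g z * f (GT.act g z)))
    * hρτ.conj_mul_Sfun_act hτ g z

lemma IsEquivariant.Atop_projTranslate (hρτ : IsEquivariant ρ τ) (hτ : Differentiable ℝ τ)
    {f : ℂ → ℂ} (hf : Differentiable ℝ f) (g : GT) (z : ℂ) :
    Atop ν μ τ (projTranslate ν μ ρ τ g f) z
      = (g.a : ℂ) * projTranslate ν μ ρ τ g (Atop ν μ τ f) z := by
  have hJ := differentiable_Jfun (ν := ν) (μ := μ) (ρ := ρ) (g := g) hτ
  have hfg : DifferentiableAt ℝ (fun w => f (GT.act g w)) z :=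
    (hf _).comp z ((differentiableAt_id.const_mul _).add_const _)
  unfold Atop projTranslate
  rw [wderiv_mul (hJ z) hfg, wderiv_Jfun hτ, wderiv_comp_act (hf _)]
  linear_combination (-(Jfun ν μ ρ τ g z * f (GT.act g z)))
    * hρτ.mul_conj_Sfun_act hτ g z

end Equivariant

theorem statement3_general (ν μ : ℝ)
    (ρ : GT →* GT) (τ : ℂ → ℂ) (hτ : ContDiff ℝ (⊤ : ℕ∞) τ)
    (hequiv : ∀ (g : GT) (z : ℂ), τ (GT.act g z) = GT.act (ρ g) (τ z))
    (g : GT) (f : ℂ → ℂ) (hf : ContDiff ℝ (⊤ : ℕ∞) f) (z : ℂ) :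
    Lop ν μ τ (fun w => Jfun ν μ (⇑ρ) τ g w * f (GT.act g w)) z
      = Jfun ν μ (⇑ρ) τ g z * Lop ν μ τ f (GT.act g z) := by
  have hρτ : IsEquivariant ρ τ := hequiv
  have hτ₂ : ContDiff ℝ 2 τ := hτ.of_le (WithTop.coe_le_coe.mpr le_top)
  have hf₂ : ContDiff ℝ 2 f := hf.of_le (WithTop.coe_le_coe.mpr le_top)
  have hτ₁ : ContDiff ℝ 1 τ := hτ₂.of_le one_le_two
  have hτd : Differentiable ℝ τ := hτ₂.differentiable two_ne_zero
  have hAf := contDiff_Aop (ν := ν) (μ := μ) hτ₂ hf₂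
  have hTAf := (contDiff_projTranslate (ν := ν) (μ := μ) (ρ := ρ) hτ₁ hAf g).differentiable
    one_ne_zero
  change Lop ν μ τ (projTranslate ν μ ρ τ g f) z = _
  rw [Lop_eq_Atop_Aop hτ₂ (contDiff_projTranslate hτ₂ hf₂ g), Lop_eq_Atop_Aop hτ₂ hf₂,
    funext (hρτ.Aop_projTranslate hτd (hf₂.differentiable two_ne_zero) g),
    Atop_const_mul _ (hTAf z), hρτ.Atop_projTranslate hτd (hAf.differentiable one_ne_zero),
    hρτ.Bfun_act hτd]
  unfold projTranslate
  linear_combination (Jfun ν μ ρ τ g z * Atop ν μ τ (Aop ν μ τ f) (GT.act g z))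
    * Circle.conj_mul_self g.a

theorem statement3 (ν μ : ℝ) (hν : 0 < ν) (hμ : 0 < μ)
    (ρ : GT →* GT) (τ : ℂ → ℂ) (hτ : ContDiff ℝ (⊤ : ℕ∞) τ)
    (hequiv : ∀ (g : GT) (z : ℂ), τ (GT.act g z) = GT.act (ρ g) (τ z))
    (g : GT) (f : ℂ → ℂ) (hf : ContDiff ℝ (⊤ : ℕ∞) f) (z : ℂ) :
    Lop ν μ τ (fun w => Jfun ν μ (⇑ρ) τ g w * f (GT.act g w)) z
      = Jfun ν μ (⇑ρ) τ g z * Lop ν μ τ f (GT.act g z) :=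
  statement3_general ν μ ρ τ hτ hequiv g f hf z
end
end

section
/- Assume the gauge function φ exists and the constancy condition on B holds. The map χ_τ : Γ → ℂ, χ_τ(γ) = exp(iφ(γ) − 2iμ·Im⟨τ(0), ρ([1,γ])⁻¹·0⟩), satisfies the pseudo-character property χ_τ(γ+γ') = exp(2iB·Im⟨γ,γ'⟩)·χ_τ(γ)·χ_τ(γ') for all γ, γ' ∈ Γ if and only if (1/π)·φ_ρ(γ,γ') is an integer for all γ, γ' ∈ Γ. -/
noncomputable section

open Complex

/-!
In `𝕋 ⋉ ℂ` every translation `[1,γ]` is a commutator, so `ρ` maps translations to translations,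
`ρ([1,γ]) = [1,ψ(γ)]`, and equivariance reads `τ(z + γ) = τ(z) + ψ(γ)`. Thus `ψ = τ - τ(0)` is a
continuous additive map, hence `ℝ`-linear, and `τ(z) = τ(0) + a z + b z̄`. Then
`B = ν + μ(|a|² - |b|²)` and `S(z) = B z + C`, so `∂φ/∂z̄ = -iC` is constant; since `φ` is real this
fixes its differential, and `φ` is linear. Consequently `χ_τ` is a genuine character and
`φ_ρ(γ,γ') = -B Im⟨γ,γ'⟩`, so the pseudo-character identity is `exp(2iB Im⟨γ,γ'⟩) = 1`, i.e.
`φ_ρ(γ,γ')/π ∈ ℤ`.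
-/

open ComplexConjugate

namespace GT

@[simp] lemma mul_a (g h : GT) : (g * h).a = g.a * h.a := rfl
@[simp] lemma mul_b (g h : GT) : (g * h).b = (g.a : ℂ) * h.b + g.b := rfl
@[simp] lemma inv_a (g : GT) : g⁻¹.a = g.a⁻¹ := rfl
@[simp] lemma inv_b (g : GT) : g⁻¹.b = -((g.a⁻¹ : ℂ) * g.b) := rfl

@[simp] lemma one_b : (1 : GT).b = 0 := rfl

@[simp] lemma act_zero (g : GT) : act g 0 = g.b := by simp [act]

def rotation : GT →* Circle where
  toFun g := g.a
  map_one' := rfl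
  map_mul' _ _ := rfl

lemma translation_add (γ γ' : ℂ) : (⟨1, γ + γ'⟩ : GT) = ⟨1, γ⟩ * ⟨1, γ'⟩ := by
  ext <;> simp [add_comm]

lemma translation_inv (γ : ℂ) : (⟨1, γ⟩ : GT)⁻¹ = ⟨1, -γ⟩ := by
  ext <;> simp

lemma rotation_commutator_translation (u : Circle) (c : ℂ) :
    (⟨u, 0⟩ : GT) * ⟨1, c⟩ * (⟨u, 0⟩ : GT)⁻¹ * (⟨1, c⟩ : GT)⁻¹ = ⟨1, (u - 1) * c⟩ := by
  ext
  · simp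
  · simp; ring

lemma map_translation_eq_one {M : Type*} [CommGroup M] (f : GT →* M) (γ : ℂ) :
    f ⟨1, γ⟩ = 1 := by
  have hγ : (⟨1, γ⟩ : GT) = ⟨1, ((Circle.exp Real.pi : ℂ) - 1) * (-γ / 2)⟩ := by
    rw [Circle.coe_exp, Complex.exp_pi_mul_I]; congr 1; ring
  rw [hγ, ← rotation_commutator_translation, map_mul, map_mul, map_mul, map_inv, map_inv,
    mul_right_comm (f _), mul_inv_cancel, one_mul, mul_inv_cancel]

end GT

lemma map_translation_a_eq_one (ρ : GT →* GT) (γ : ℂ) : (ρ ⟨1, γ⟩).a = 1 :=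
  GT.map_translation_eq_one (GT.rotation.comp ρ) γ

def translationPart (ρ : GT →* GT) : ℂ →+ ℂ where
  toFun γ := (ρ ⟨1, γ⟩).b
  map_zero' := by simp [show (⟨1, 0⟩ : GT) = 1 from rfl]
  map_add' γ γ' := by simp [GT.translation_add, map_translation_a_eq_one, add_comm]

lemma map_translation (ρ : GT →* GT) (γ : ℂ) : ρ ⟨1, γ⟩ = ⟨1, translationPart ρ γ⟩ :=
  GT.ext (map_translation_a_eq_one ρ γ) rfl

lemma ContinuousLinearMap.apply_eq_re_smul_add_im_smul {E : Type*} [AddCommGroup E]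
    [Module ℝ E] [TopologicalSpace E] (T : ℂ →L[ℝ] E) (z : ℂ) :
    T z = z.re • T 1 + z.im • T I := by
  have hz : z = z.re • (1 : ℂ) + z.im • I := by simp [Complex.real_smul]
  conv_lhs => rw [hz]
  rw [map_add, map_smul, map_smul]

lemma ContinuousLinearMap.exists_eq_mul_add_mul_conj (T : ℂ →L[ℝ] ℂ) :
    ∃ a b : ℂ, ∀ z, T z = a * z + b * conj z := by
  refine ⟨(T 1 - I * T I) / 2, (T 1 + I * T I) / 2, fun z => ?_⟩
  rw [T.apply_eq_re_smul_add_im_smul, Complex.real_smul, Complex.real_smul]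
  conv_rhs => rw [← Complex.re_add_im z]
  simp only [map_add, map_mul, Complex.conj_ofReal, Complex.conj_I]
  linear_combination (↑z.im * T I) * Complex.I_mul_I

section Equivariant

variable {ρ : GT →* GT} {τ : ℂ → ℂ}

lemma translate_of_equivariant (hequiv : ∀ (g : GT) (z : ℂ), τ (GT.act g z) = GT.act (ρ g) (τ z))
    (z γ : ℂ) : τ (z + γ) = τ z + translationPart ρ γ := by
  simpa [GT.act, map_translation, add_comm] using hequiv ⟨1, γ⟩ z

lemma translationPart_eq_mul_add_mul_conj (hτ : Continuous τ)
    (hequiv : ∀ (g : GT) (z : ℂ), τ (GT.act g z) = GT.act (ρ g) (τ z)) :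
    ∃ a b : ℂ, ∀ γ, translationPart ρ γ = a * γ + b * conj γ := by
  have hψ : ⇑(translationPart ρ) = fun γ => τ γ - τ 0 := by
    funext γ
    rw [← zero_add γ, translate_of_equivariant hequiv, zero_add, add_sub_cancel_left]
  have hcont : Continuous (translationPart ρ) := hψ ▸ hτ.sub continuous_const
  exact ((translationPart ρ).toRealLinearMap hcont).exists_eq_mul_add_mul_conj

end Equivariant

lemma hasFDerivAt_affine (c a b z : ℂ) :
    HasFDerivAt (fun w => c + (a * w + b * conj w))
      (a • ContinuousLinearMap.id ℝ ℂ + b • Complex.conjCLE.toContinuousLinearMap) z :=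
  (((hasFDerivAt_id z).const_mul a).add
    (Complex.conjCLE.toContinuousLinearMap.hasFDerivAt.const_mul b)).const_add c

lemma wderiv_affine (c a b z : ℂ) : wderiv (fun w => c + (a * w + b * conj w)) z = a := by
  rw [wderiv, (hasFDerivAt_affine c a b z).fderiv]
  simp only [add_apply, smul_apply,
    ContinuousLinearMap.id_apply, smul_eq_mul, ContinuousLinearEquiv.coe_coe,
    Complex.conjCLE_apply, map_one, Complex.conj_I]
  linear_combination (b - a) / 2 * I_mul_I

lemma wderivBar_affine (c a b z : ℂ) : wderivBar (fun w => c + (a * w + b * conj w)) z = b := by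
  rw [wderivBar, (hasFDerivAt_affine c a b z).fderiv]
  simp only [add_apply, smul_apply,
    ContinuousLinearMap.id_apply, smul_eq_mul, ContinuousLinearEquiv.coe_coe,
    Complex.conjCLE_apply, map_one, Complex.conj_I]
  linear_combination (a - b) / 2 * I_mul_I

lemma fderiv_apply_eq_two_mul_re_conj_mul_wderivBar {φ : ℂ → ℝ} {z : ℂ}
    (hφ : DifferentiableAt ℝ φ z) (v : ℂ) :
    fderiv ℝ φ z v = 2 * (conj v * wderivBar (fun w => (φ w : ℂ)) z).re := by
  have hofReal : fderiv ℝ (fun w => (φ w : ℂ)) z = Complex.ofRealCLM.comp (fderiv ℝ φ z) :=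
    (Complex.ofRealCLM.hasFDerivAt.comp z hφ.hasFDerivAt).fderiv
  rw [wderivBar, hofReal, (fderiv ℝ φ z).apply_eq_re_smul_add_im_smul v]
  simp only [ContinuousLinearMap.comp_apply, Complex.ofRealCLM_apply, smul_eq_mul, one_div,
    Complex.mul_re, Complex.mul_im, Complex.add_re, Complex.add_im, Complex.conj_re, Complex.conj_im,
    Complex.ofReal_re, Complex.ofReal_im, Complex.I_re, Complex.I_im, Complex.inv_re, Complex.inv_im,
    Complex.re_ofNat, Complex.im_ofNat, Complex.normSq_ofNat]
  ring

lemma eq_add_of_hasFDerivAt_const {E F : Type*} [NormedAddCommGroup E] [NormedSpace ℝ E]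
    [NormedAddCommGroup F] [NormedSpace ℝ F] {f : E → F} {L : E →L[ℝ] F}
    (hf : ∀ z, HasFDerivAt f L z) (z : E) : f z = f 0 + L z := by
  have hg : ∀ z, HasFDerivAt (fun z => f 0 + L z) L z := fun z => L.hasFDerivAt.const_add _
  refine congrFun (eq_of_fderiv_eq (fun z => (hf z).differentiableAt)
    (fun z => (hg z).differentiableAt) (fun z => (hf z).fderiv.trans (hg z).fderiv.symm) 0 ?_) z
  simp

lemma map_add_of_wderivBar_eq_const {φ : ℂ → ℝ} (hφ : Differentiable ℝ φ) (h0 : φ 0 = 0)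
    {k : ℂ} (hk : ∀ z, wderivBar (fun w => (φ w : ℂ)) z = k) (x y : ℂ) :
    φ (x + y) = φ x + φ y := by
  have hL : ∀ z, HasFDerivAt φ (fderiv ℝ φ 0) z := fun z => by
    convert (hφ z).hasFDerivAt using 1
    ext v
    rw [fderiv_apply_eq_two_mul_re_conj_mul_wderivBar (hφ 0),
      fderiv_apply_eq_two_mul_re_conj_mul_wderivBar (hφ z), hk, hk]
  rw [eq_add_of_hasFDerivAt_const hL (x + y), eq_add_of_hasFDerivAt_const hL x,
    eq_add_of_hasFDerivAt_const hL y, h0, map_add]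
  ring

section AffineTau

variable {τ : ℂ → ℂ} {c a b : ℂ}

lemma Bfun_eq_of_affine (ν μ : ℝ) (hτ : ∀ z, τ z = c + (a * z + b * conj z)) (z : ℂ) :
    Bfun ν μ τ z = ν + μ * (‖a‖ ^ 2 - ‖b‖ ^ 2) := by
  obtain rfl : τ = _ := funext hτ
  rw [Bfun, wderiv_affine, wderivBar_affine]

lemma Sfun_eq_of_affine (ν μ : ℝ) (hτ : ∀ z, τ z = c + (a * z + b * conj z)) (z : ℂ) :
    Sfun ν μ τ z = (ν + μ * (‖a‖ ^ 2 - ‖b‖ ^ 2) : ℝ) * z + μ * (c * conj a - conj c * b) := by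
  have hconj : (fun w => conj (τ w)) = fun w => conj c + (conj b * w + conj a * conj w) := by
    funext w; simp [hτ, add_comm]
  rw [Sfun, hconj, wderivBar_affine]
  obtain rfl : τ = _ := funext hτ
  rw [wderivBar_affine]
  simp only [map_add, map_mul, Complex.conj_conj]
  push_cast
  linear_combination (μ * z : ℂ) * (Complex.mul_conj' a - Complex.mul_conj' b)

end AffineTau

lemma herm_im_mul_add_mul_conj (a b z w : ℂ) :
    (herm (a * z + b * conj z) (a * w + b * conj w)).im = (‖a‖ ^ 2 - ‖b‖ ^ 2) * (herm z w).im := by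
  simp only [herm, map_add, map_mul, Complex.conj_conj, Complex.sq_norm, Complex.normSq_apply,
    Complex.add_im, Complex.add_re, Complex.mul_im, Complex.mul_re, Complex.conj_re,
    Complex.conj_im]
  ring

lemma chiTau_ne_zero (μ : ℝ) (ρ : GT → GT) (τ : ℂ → ℂ) (φ : ℂ → ℝ) (γ : ℂ) :
    chiTau μ ρ τ φ γ ≠ 0 :=
  Complex.exp_ne_zero _

section Translations

variable (ρ : GT →* GT)

lemma chiTau_add (μ : ℝ) (τ : ℂ → ℂ) {φ : ℂ → ℝ} (hφ : ∀ x y, φ (x + y) = φ x + φ y)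
    (γ γ' : ℂ) : chiTau μ ρ τ φ (γ + γ') = chiTau μ ρ τ φ γ * chiTau μ ρ τ φ γ' := by
  simp only [chiTau, map_translation, GT.translation_inv, GT.act_zero, ← Complex.exp_add, herm, hφ,
    map_add, map_neg, mul_add, mul_neg, Complex.add_im, Complex.neg_im]
  congr 1
  push_cast
  ring

lemma phiRho_translation (ν μ : ℝ) {a b : ℂ}
    (hψ : ∀ γ, translationPart ρ γ = a * γ + b * conj γ) (γ γ' : ℂ) :
    phiRho ν μ ρ ⟨1, γ⟩ ⟨1, γ'⟩ = -((ν + μ * (‖a‖ ^ 2 - ‖b‖ ^ 2)) * (herm γ γ').im) := by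
  have hψψ := herm_im_mul_add_mul_conj a b γ γ'
  rw [← hψ, ← hψ] at hψψ
  simp only [phiRho, map_translation, GT.translation_inv, GT.act_zero, map_neg, herm,
    neg_mul, Complex.add_im, Complex.neg_im, Complex.im_ofReal_mul] at hψψ ⊢
  rw [hψψ]
  ring

end Translations

lemma exp_two_mul_I_mul_eq_one_iff (t : ℝ) :
    Complex.exp (2 * I * t) = 1 ↔ ∃ n : ℤ, 1 / Real.pi * -t = n := by
  rw [Complex.exp_eq_one_iff]
  refine (Equiv.neg ℤ).exists_congr fun n => ?_
  have hπ := Real.pi_ne_zero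
  rw [Equiv.neg_apply, Int.cast_neg,
    show (n : ℂ) * (2 * Real.pi * I) = 2 * I * ((n * Real.pi : ℝ) : ℂ) by push_cast; ring,
    mul_right_inj' (by simp), Complex.ofReal_inj]
  field_simp
  constructor <;> intro h <;> linarith

theorem statement9_general (ν μ : ℝ)
    (ρ : GT →* GT) (τ : ℂ → ℂ) (hτ : ContDiff ℝ (⊤ : ℕ∞) τ)
    (hequiv : ∀ (g : GT) (z : ℂ), τ (GT.act g z) = GT.act (ρ g) (τ z))
    (B : ℝ) (hB : ∀ z : ℂ, Bfun ν μ τ z = B)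
    (φ : ℂ → ℝ) (hφs : ContDiff ℝ (⊤ : ℕ∞) φ) (hφ0 : φ 0 = 0)
    (hφ : ∀ z : ℂ, wderivBar (fun w => (φ w : ℂ)) z = -Complex.I * (Sfun ν μ τ z - (B : ℂ) * z))
    (ω₁ ω₂ : ℂ) :
    (∀ γ γ' : ℂ, inLattice ω₁ ω₂ γ → inLattice ω₁ ω₂ γ' →
        chiTau μ (⇑ρ) τ φ (γ + γ')
          = Complex.exp (2 * Complex.I * (B : ℂ) * ((herm γ γ').im : ℂ)) *
              chiTau μ (⇑ρ) τ φ γ * chiTau μ (⇑ρ) τ φ γ') ↔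
      (∀ γ γ' : ℂ, inLattice ω₁ ω₂ γ → inLattice ω₁ ω₂ γ' →
        ∃ n : ℤ, (1 / Real.pi) * phiRho ν μ (⇑ρ) ⟨1, γ⟩ ⟨1, γ'⟩ = (n : ℝ)) := by
  obtain ⟨a, b, hψ⟩ := translationPart_eq_mul_add_mul_conj hτ.continuous hequiv
  have hτ_affine : ∀ z, τ z = τ 0 + (a * z + b * conj z) := fun z => by
    rw [← hψ, ← translate_of_equivariant hequiv, zero_add]
  have hB_eq : B = ν + μ * (‖a‖ ^ 2 - ‖b‖ ^ 2) := (hB 0).symm.trans (Bfun_eq_of_affine ν μ hτ_affine 0)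
  have hφ_add : ∀ x y, φ (x + y) = φ x + φ y :=
    map_add_of_wderivBar_eq_const (hφs.differentiable (by simp)) hφ0 fun z => by
      rw [hφ, Sfun_eq_of_affine ν μ hτ_affine, ← hB_eq, add_sub_cancel_left]
  refine forall₂_congr fun γ γ' => imp_congr_right fun _ => imp_congr_right fun _ => ?_
  rw [chiTau_add ρ μ τ hφ_add, phiRho_translation ρ ν μ hψ, ← hB_eq, mul_assoc, eq_comm,
    mul_eq_right₀ (mul_ne_zero (chiTau_ne_zero μ ρ τ φ γ) (chiTau_ne_zero μ ρ τ φ γ')), mul_assoc,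
    ← Complex.ofReal_mul, exp_two_mul_I_mul_eq_one_iff]

theorem statement9 (ν μ : ℝ) (hν : 0 < ν) (hμ : 0 < μ)
    (ρ : GT →* GT) (τ : ℂ → ℂ) (hτ : ContDiff ℝ (⊤ : ℕ∞) τ)
    (hequiv : ∀ (g : GT) (z : ℂ), τ (GT.act g z) = GT.act (ρ g) (τ z))
    (B : ℝ) (hB : ∀ z : ℂ, Bfun ν μ τ z = B)
    (φ : ℂ → ℝ) (hφs : ContDiff ℝ (⊤ : ℕ∞) φ) (hφ0 : φ 0 = 0)
    (hφ : ∀ z : ℂ, wderivBar (fun w => (φ w : ℂ)) z = -Complex.I * (Sfun ν μ τ z - (B : ℂ) * z))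
    (ω₁ ω₂ : ℂ) (hω : LinearIndependent ℝ ![ω₁, ω₂]) :
    (∀ γ γ' : ℂ, inLattice ω₁ ω₂ γ → inLattice ω₁ ω₂ γ' →
        chiTau μ (⇑ρ) τ φ (γ + γ')
          = Complex.exp (2 * Complex.I * (B : ℂ) * ((herm γ γ').im : ℂ)) *
              chiTau μ (⇑ρ) τ φ γ * chiTau μ (⇑ρ) τ φ γ') ↔
      (∀ γ γ' : ℂ, inLattice ω₁ ω₂ γ → inLattice ω₁ ω₂ γ' →
        ∃ n : ℤ, (1 / Real.pi) * phiRho ν μ (⇑ρ) ⟨1, γ⟩ ⟨1, γ'⟩ = (n : ℝ)) :=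
  statement9_general ν μ ρ τ hτ hequiv B hB φ hφs hφ0 hφ ω₁ ω₂
end
end
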